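/- arXiv:2209.05574 — 7 statements merged into one kernel-verified Lean document; each statement's English description precedes it below -/
import Mathlib

section
/- Let v0, v1, d, a be real numbers with d > 0 and a > 0, and let Ξ⁰ be the 2×2 matrix [[v0, v1 − a], [v0 + d, v0 + d − a]]. Then Ξ⁰ has no pure saddle point if and only if v1 > v0 + max{d, a}. -/
open Matrix

/-- A pure saddle point of a 2×2 matrix game where the row player minimizes and
the column player maximizes: M(i*,j*) ≤ M(i,j*) for all i and M(i*,j*) ≥ M(i*,j) for all j. -/
def HasPureSaddle (M : Matrix (Fin 2) (Fin 2) ℝ) : Prop :=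
  ∃ i j, (∀ i', M i j ≤ M i' j) ∧ (∀ j', M i j' ≤ M i j)

theorem hasPureSaddle_iff (M : Matrix (Fin 2) (Fin 2) ℝ) :
    HasPureSaddle M ↔
      (M 0 0 ≤ M 1 0 ∧ M 0 1 ≤ M 0 0) ∨ (M 0 1 ≤ M 1 1 ∧ M 0 0 ≤ M 0 1) ∨
      (M 1 0 ≤ M 0 0 ∧ M 1 1 ≤ M 1 0) ∨ (M 1 1 ≤ M 0 1 ∧ M 1 0 ≤ M 1 1) := by
  simp [HasPureSaddle, Fin.exists_fin_two, Fin.forall_fin_two, or_assoc]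

/-- Entry `(1, 0)` is not a column minimum since `0 < d`, and entry `(1, 1)` is not a row maximum
since `0 < a`; only `(0, 0)` and `(0, 1)` remain. -/
theorem hasPureSaddle_defender_iff (v0 v1 d a : ℝ) (hd : 0 < d) (ha : 0 < a) :
    HasPureSaddle !![v0, v1 - a; v0 + d, v0 + d - a] ↔ v1 ≤ v0 + a ∨ v1 ≤ v0 + d := by
  rw [hasPureSaddle_iff]
  simp only [of_apply, cons_val', cons_val_zero, cons_val_one, empty_val', cons_val_fin_one]
  constructor
  · rintro (⟨-, h⟩ | ⟨h, -⟩ | ⟨h, -⟩ | ⟨-, h⟩)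
    · exact Or.inl (by linarith)
    · exact Or.inr (by linarith)
    · linarith
    · linarith
  · rintro (h | h)
    · exact Or.inl ⟨by linarith, by linarith⟩
    · by_cases hva : v1 ≤ v0 + a
      · exact Or.inl ⟨by linarith, by linarith⟩
      · exact Or.inr (Or.inl ⟨by linarith, by linarith⟩)

/-- the defender-control cost-to-go matrix Ξ⁰ has no pure saddle point
iff v1 > v0 + max{d, a}. -/
theorem stmt_2 (v0 v1 d a : ℝ) (hd : 0 < d) (ha : 0 < a) :
    ¬ HasPureSaddle !![v0, v1 - a; v0 + d, v0 + d - a] ↔ v1 > v0 + max d a := by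
  rw [hasPureSaddle_defender_iff v0 v1 d a hd ha, gt_iff_lt, add_max, max_lt_iff,
    not_or, not_le, not_le, and_comm]
end

section
/- Let v0, v1, d, a be real numbers with d > 0 and a > 0, and let Ξ¹ be the 2×2 matrix [[v1, v1 − a], [v0 + d, v1 + d − a]]. Then Ξ¹ has no pure saddle point if and only if v1 > v0 + max{d, a}. -/
open Matrix

/-- The matrix `Ξ¹`. -/
def adversaryCostToGo (v0 v1 d a : ℝ) : Matrix (Fin 2) (Fin 2) ℝ :=
  !![v1, v1 - a; v0 + d, v1 + d - a]

/-- Of the four candidate saddle points, `(0, 1)` and `(1, 1)` are excluded by the positive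
takeover costs; `(0, 0)` is one iff `v1 ≤ v0 + d`, and `(1, 0)` iff `v0 + d ≤ v1 ≤ v0 + a`. -/
theorem hasPureSaddle_adversaryCostToGo_iff {v0 v1 d a : ℝ} (hd : 0 < d) (ha : 0 < a) :
    HasPureSaddle (adversaryCostToGo v0 v1 d a) ↔ v1 ≤ v0 + max d a := by
  simp only [hasPureSaddle_iff, adversaryCostToGo, of_apply, cons_val', cons_val_zero,
    cons_val_one, cons_val_fin_one]
  rw [← max_add_add_left, le_max_iff]
  constructor
  · rintro (⟨h00, -⟩ | ⟨-, h01⟩ | ⟨-, h10⟩ | ⟨h11, -⟩)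
    · exact .inl h00
    · linarith
    · right; linarith
    · linarith
  · rintro (hvd | hva)
    · exact .inl ⟨hvd, by linarith⟩
    · rcases le_total v1 (v0 + d) with hvd | hdv
      · exact .inl ⟨hvd, by linarith⟩
      · exact .inr (.inr (.inl ⟨hdv, by linarith⟩))

/-- the adversary-control cost-to-go matrix Ξ¹ has no pure saddle point
iff v1 > v0 + max{d, a}. -/
theorem stmt_3 (v0 v1 d a : ℝ) (hd : 0 < d) (ha : 0 < a) :
    ¬ HasPureSaddle !![v1, v1 - a; v0 + d, v1 + d - a] ↔ v1 > v0 + max d a :=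
  (not_congr (hasPureSaddle_adversaryCostToGo_iff hd ha)).trans not_le
end

section
/- Let v0, v1, d, a, g be real numbers with d > 0, a > 0, and v1 > v0 + max{d, a}, and let Ξ⁰ be the 2×2 matrix [[v0, v1 − a], [v0 + d, v0 + d − a]]. Then the strategies y* = (a/(v1 − v0), 1 − a/(v1 − v0)) and z* = (1 − d/(v1 − v0), d/(v1 − v0)) lie in Δ₂, form a mixed saddle point of Ξ⁰, and the resulting value satisfies g + y*ᵀ Ξ⁰ z* = g + d + v0 − d·a/(v1 − v0). -/
open Matrix

/-- The probability simplex in ℝ²: vectors (β, 1-β) with β ∈ [0,1]. -/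
def Δ₂ : Set (Fin 2 → ℝ) := {y | 0 ≤ y 0 ∧ 0 ≤ y 1 ∧ y 0 + y 1 = 1}

/-- Payoff yᵀ M z for a 2×2 matrix game. -/
def payoff (M : Matrix (Fin 2) (Fin 2) ℝ) (y z : Fin 2 → ℝ) : ℝ :=
  y 0 * M 0 0 * z 0 + y 0 * M 0 1 * z 1 + y 1 * M 1 0 * z 0 + y 1 * M 1 1 * z 1

/-- Mixed saddle point of M: row player minimizes, column player maximizes. -/
def IsMixedSaddle (M : Matrix (Fin 2) (Fin 2) ℝ) (ys zs : Fin 2 → ℝ) : Prop :=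
  ys ∈ Δ₂ ∧ zs ∈ Δ₂ ∧
    (∀ z ∈ Δ₂, payoff M ys z ≤ payoff M ys zs) ∧
    (∀ y ∈ Δ₂, payoff M ys zs ≤ payoff M y zs)

/-!
Both strategies are equalizing: `y*` makes the adversary indifferent between the two columns
of `Ξ⁰` and `z*` makes the defender indifferent between its two rows. Against an equalizing
strategy every reply earns the same payoff, so neither player can gain by deviating.
-/

theorem vec2_mem_Δ₂_iff {β γ : ℝ} : ![β, γ] ∈ Δ₂ ↔ 0 ≤ β ∧ 0 ≤ γ ∧ β + γ = 1 :=
  Iff.rfl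

variable {M : Matrix (Fin 2) (Fin 2) ℝ}

theorem payoff_eq_of_equalizing_row {y z : Fin 2 → ℝ}
    (hy : y 0 * M 0 0 + y 1 * M 1 0 = y 0 * M 0 1 + y 1 * M 1 1) (hz : z ∈ Δ₂) :
    payoff M y z = y 0 * M 0 0 + y 1 * M 1 0 := by
  obtain ⟨-, -, hz⟩ := hz
  unfold payoff
  linear_combination (y 0 * M 0 0 + y 1 * M 1 0) * hz - z 1 * hy

theorem payoff_eq_of_equalizing_col {y z : Fin 2 → ℝ}
    (hz : M 0 0 * z 0 + M 0 1 * z 1 = M 1 0 * z 0 + M 1 1 * z 1) (hy : y ∈ Δ₂) :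
    payoff M y z = M 0 0 * z 0 + M 0 1 * z 1 := by
  obtain ⟨-, -, hy⟩ := hy
  unfold payoff
  linear_combination (M 0 0 * z 0 + M 0 1 * z 1) * hy - y 1 * hz

theorem isMixedSaddle_of_equalizing {ys zs : Fin 2 → ℝ} (hys : ys ∈ Δ₂) (hzs : zs ∈ Δ₂)
    (hrow : ys 0 * M 0 0 + ys 1 * M 1 0 = ys 0 * M 0 1 + ys 1 * M 1 1)
    (hcol : M 0 0 * zs 0 + M 0 1 * zs 1 = M 1 0 * zs 0 + M 1 1 * zs 1) :
    IsMixedSaddle M ys zs := by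
  refine ⟨hys, hzs, fun z hz => ?_, fun y hy => ?_⟩
  · rw [payoff_eq_of_equalizing_row hrow hz, payoff_eq_of_equalizing_row hrow hzs]
  · rw [payoff_eq_of_equalizing_col hcol hy, payoff_eq_of_equalizing_col hcol hys]

/-- mixed saddle point and value of the FlipDyn game matrix Ξ⁰
(defender in control). -/
theorem stmt_4 (v0 v1 d a g : ℝ) (hd : 0 < d) (ha : 0 < a)
    (hv : v1 > v0 + max d a) :
    let M : Matrix (Fin 2) (Fin 2) ℝ := !![v0, v1 - a; v0 + d, v0 + d - a]
    let ys : Fin 2 → ℝ := ![a / (v1 - v0), 1 - a / (v1 - v0)]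
    let zs : Fin 2 → ℝ := ![1 - d / (v1 - v0), d / (v1 - v0)]
    ys ∈ Δ₂ ∧ zs ∈ Δ₂ ∧ IsMixedSaddle M ys zs ∧
    g + payoff M ys zs = g + d + v0 - d * a / (v1 - v0) := by
  intro M ys zs
  have hd' : d < v1 - v0 := by linarith [le_max_left d a]
  have ha' : a < v1 - v0 := by linarith [le_max_right d a]
  have hpos : 0 < v1 - v0 := hd.trans hd'
  have hys : ys ∈ Δ₂ := vec2_mem_Δ₂_iff.2
    ⟨by positivity, sub_nonneg.2 ((div_le_one hpos).2 ha'.le), add_sub_cancel _ _⟩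
  have hzs : zs ∈ Δ₂ := vec2_mem_Δ₂_iff.2
    ⟨sub_nonneg.2 ((div_le_one hpos).2 hd'.le), by positivity, sub_add_cancel _ _⟩
  have hrow : ys 0 * M 0 0 + ys 1 * M 1 0 = ys 0 * M 0 1 + ys 1 * M 1 1 := by
    simp only [M, ys, of_apply, cons_val', cons_val_zero, cons_val_one, cons_val_fin_one]
    field_simp
    ring
  have hcol : M 0 0 * zs 0 + M 0 1 * zs 1 = M 1 0 * zs 0 + M 1 1 * zs 1 := by
    simp only [M, zs, of_apply, cons_val', cons_val_zero, cons_val_one, cons_val_fin_one]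
    field_simp
    ring
  refine ⟨hys, hzs, isMixedSaddle_of_equalizing hys hzs hrow hcol, ?_⟩
  rw [payoff_eq_of_equalizing_col hcol hys]
  simp only [M, zs, of_apply, cons_val', cons_val_zero, cons_val_one, cons_val_fin_one]
  field_simp
  ring
end

section
/- Let v0, v1, d, a, g be real numbers with d > 0, a > 0, and v1 > v0 + max{d, a}, and let Ξ¹ be the 2×2 matrix [[v1, v1 − a], [v0 + d, v1 + d − a]]. Then the strategies y* = (1 − a/(v1 − v0), a/(v1 − v0)) and z* = (d/(v1 − v0), 1 − d/(v1 − v0)) lie in Δ₂, form a mixed saddle point of Ξ¹, and the resulting value satisfies g + y*ᵀ Ξ¹ z* = g − a + v1 + d·a/(v1 − v0). -/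
/-! y* makes both columns of Ξ¹ cost the defender the same amount, v1 − a + d·a/(v1 − v0), and z*
makes both rows yield that same amount; each player is then indifferent to every deviation of the
other, so (y*, z*) is a saddle point with that value. The bound v1 − v0 > max(d, a) is what puts
y* and z* in Δ₂. -/

open Matrix

section TwoByTwo

variable {M : Matrix (Fin 2) (Fin 2) ℝ} {y z : Fin 2 → ℝ} {c : ℝ}

lemma one_sub_cons_mem_Δ₂ {β : ℝ} (h0 : 0 ≤ β) (h1 : β ≤ 1) : ![1 - β, β] ∈ Δ₂ :=
  ⟨by simpa using h1, by simpa using h0, by simp⟩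

lemma cons_one_sub_mem_Δ₂ {β : ℝ} (h0 : 0 ≤ β) (h1 : β ≤ 1) : ![β, 1 - β] ∈ Δ₂ :=
  ⟨by simpa using h0, by simpa using h1, by simp⟩

lemma payoff_eq_of_row_equalizing (h0 : y 0 * M 0 0 + y 1 * M 1 0 = c)
    (h1 : y 0 * M 0 1 + y 1 * M 1 1 = c) (hz : z ∈ Δ₂) : payoff M y z = c := by
  unfold payoff
  linear_combination z 0 * h0 + z 1 * h1 + c * hz.2.2

lemma payoff_eq_of_col_equalizing (h0 : M 0 0 * z 0 + M 0 1 * z 1 = c)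
    (h1 : M 1 0 * z 0 + M 1 1 * z 1 = c) (hy : y ∈ Δ₂) : payoff M y z = c := by
  unfold payoff
  linear_combination y 0 * h0 + y 1 * h1 + c * hy.2.2

lemma isMixedSaddle_of_equalizing_s5 (hy : y ∈ Δ₂) (hz : z ∈ Δ₂)
    (hrow0 : y 0 * M 0 0 + y 1 * M 1 0 = c) (hrow1 : y 0 * M 0 1 + y 1 * M 1 1 = c)
    (hcol0 : M 0 0 * z 0 + M 0 1 * z 1 = c) (hcol1 : M 1 0 * z 0 + M 1 1 * z 1 = c) :
    IsMixedSaddle M y z := by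
  have hval := payoff_eq_of_row_equalizing hrow0 hrow1 hz
  refine ⟨hy, hz, fun z' hz' => ?_, fun y' hy' => ?_⟩
  · rw [payoff_eq_of_row_equalizing hrow0 hrow1 hz', hval]
  · rw [payoff_eq_of_col_equalizing hcol0 hcol1 hy', hval]

end TwoByTwo

/-- mixed saddle point and value of the FlipDyn game matrix Ξ¹
(adversary in control). -/
theorem stmt_5 (v0 v1 d a g : ℝ) (hd : 0 < d) (ha : 0 < a)
    (hv : v1 > v0 + max d a) :
    let M : Matrix (Fin 2) (Fin 2) ℝ := !![v1, v1 - a; v0 + d, v1 + d - a]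
    let ys : Fin 2 → ℝ := ![1 - a / (v1 - v0), a / (v1 - v0)]
    let zs : Fin 2 → ℝ := ![d / (v1 - v0), 1 - d / (v1 - v0)]
    ys ∈ Δ₂ ∧ zs ∈ Δ₂ ∧ IsMixedSaddle M ys zs ∧
    g + payoff M ys zs = g - a + v1 + d * a / (v1 - v0) := by
  intro M ys zs
  have hs : 0 < v1 - v0 := by linarith [le_max_left d a]
  have hys : ys ∈ Δ₂ :=
    one_sub_cons_mem_Δ₂ (by positivity) ((div_le_one hs).2 (by linarith [le_max_right d a]))
  have hzs : zs ∈ Δ₂ :=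
    cons_one_sub_mem_Δ₂ (by positivity) ((div_le_one hs).2 (by linarith [le_max_left d a]))
  have hrow0 : ys 0 * M 0 0 + ys 1 * M 1 0 = v1 - a + d * a / (v1 - v0) := by
    simp only [M, ys, of_apply, cons_val', cons_val_zero, cons_val_one, cons_val_fin_one]
    field_simp; ring
  have hrow1 : ys 0 * M 0 1 + ys 1 * M 1 1 = v1 - a + d * a / (v1 - v0) := by
    simp only [M, ys, of_apply, cons_val', cons_val_zero, cons_val_one, cons_val_fin_one]
    field_simp; ring
  have hcol0 : M 0 0 * zs 0 + M 0 1 * zs 1 = v1 - a + d * a / (v1 - v0) := by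
    simp only [M, zs, of_apply, cons_val', cons_val_zero, cons_val_one, cons_val_fin_one]
    field_simp; ring
  have hcol1 : M 1 0 * zs 0 + M 1 1 * zs 1 = v1 - a + d * a / (v1 - v0) := by
    simp only [M, zs, of_apply, cons_val', cons_val_zero, cons_val_one, cons_val_fin_one]
    field_simp; ring
  refine ⟨hys, hzs, isMixedSaddle_of_equalizing_s5 hys hzs hrow0 hrow1 hcol0 hcol1, ?_⟩
  rw [payoff_eq_of_row_equalizing hrow0 hrow1 hzs]
  ring
end

section
/- Let F, B, K, W, g, d, a, p0, p1 be real numbers with d > 0, a > 0, p0 ≥ 0, p1 ≥ 0, and suppose p̃ := (F + B·W)²·p1 − (F − B·K)²·p0 satisfies p̃ > max{d, a}. Fix any real x ≠ 0 and let Ξ⁰(x) be the 2×2 matrix with entries m11 = p0·((F − B·K)·x)², m12 = p1·((F + B·W)·x)² − a·x², m21 = m11 + d·x², m22 = m11 + (d − a)·x². Then the state-independent strategies y* = (a/p̃, (p̃ − a)/p̃) and z* = ((p̃ − d)/p̃, d/p̃) lie in Δ₂ and form a mixed saddle point of Ξ⁰(x), and the value satisfies g·x² + y*ᵀ Ξ⁰(x)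 z* = p0ₖ·x², where p0ₖ := g + (F − B·K)²·p0 + d − d·a/p̃. -/
open Matrix

/-!
The defender's strategy `y*` makes the adversary indifferent between its two pure strategies, and
`z*` makes the defender indifferent between its two. In a 2×2 game a pair of such equalizing
strategies is a saddle point, and its value is the common value of the rows (or columns).
After subtracting the common term `p0 (F - B K)² x²`, the entries of `Ξ⁰(x)` are `x²` times
`0, p̃ - a; d, d - a`, so the equalizers are read off directly.
-/

lemma vec_div_mem_Δ₂ {u v p : ℝ} (hu : 0 ≤ u) (hv : 0 ≤ v) (huv : u + v = p) (hp : 0 < p) :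
    ![u / p, v / p] ∈ Δ₂ := by
  refine ⟨div_nonneg hu hp.le, div_nonneg hv hp.le, ?_⟩
  simp only [cons_val_zero, cons_val_one, ← add_div, huv, div_self hp.ne']

lemma payoff_eq_of_equalizes_columns {M : Matrix (Fin 2) (Fin 2) ℝ} {y z : Fin 2 → ℝ} {v : ℝ}
    (h0 : y 0 * M 0 0 + y 1 * M 1 0 = v) (h1 : y 0 * M 0 1 + y 1 * M 1 1 = v) (hz : z ∈ Δ₂) :
    payoff M y z = v := by
  have hz1 : z 0 + z 1 = 1 := hz.2.2
  calc payoff M y z = (y 0 * M 0 0 + y 1 * M 1 0) * z 0 + (y 0 * M 0 1 + y 1 * M 1 1) * z 1 := by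
        unfold payoff; ring
    _ = v := by rw [h0, h1, ← mul_add, hz1, mul_one]

lemma payoff_eq_of_equalizes_rows {M : Matrix (Fin 2) (Fin 2) ℝ} {y z : Fin 2 → ℝ} {v : ℝ}
    (h0 : M 0 0 * z 0 + M 0 1 * z 1 = v) (h1 : M 1 0 * z 0 + M 1 1 * z 1 = v) (hy : y ∈ Δ₂) :
    payoff M y z = v := by
  have hy1 : y 0 + y 1 = 1 := hy.2.2
  calc payoff M y z = y 0 * (M 0 0 * z 0 + M 0 1 * z 1) + y 1 * (M 1 0 * z 0 + M 1 1 * z 1) := by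
        unfold payoff; ring
    _ = v := by rw [h0, h1, ← add_mul, hy1, one_mul]

lemma isMixedSaddle_of_equalizers {M : Matrix (Fin 2) (Fin 2) ℝ} {ys zs : Fin 2 → ℝ} {v : ℝ}
    (hys : ys ∈ Δ₂) (hzs : zs ∈ Δ₂)
    (hcol0 : ys 0 * M 0 0 + ys 1 * M 1 0 = v) (hcol1 : ys 0 * M 0 1 + ys 1 * M 1 1 = v)
    (hrow0 : M 0 0 * zs 0 + M 0 1 * zs 1 = v) (hrow1 : M 1 0 * zs 0 + M 1 1 * zs 1 = v) :
    IsMixedSaddle M ys zs ∧ payoff M ys zs = v := by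
  have hcol : ∀ z ∈ Δ₂, payoff M ys z = v := fun _ ↦ payoff_eq_of_equalizes_columns hcol0 hcol1
  have hrow : ∀ y ∈ Δ₂, payoff M y zs = v := fun _ ↦ payoff_eq_of_equalizes_rows hrow0 hrow1
  refine ⟨⟨hys, hzs, fun z hz ↦ ?_, fun y hy ↦ ?_⟩, hcol zs hzs⟩
  · rw [hcol z hz, hcol zs hzs]
  · rw [hrow y hy, hrow ys hys]

lemma flipDyn_isMixedSaddle {m s p a d : ℝ} (ha : 0 ≤ a) (hd : 0 ≤ d) (hap : a < p) (hdp : d < p) :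
    let M : Matrix (Fin 2) (Fin 2) ℝ :=
      !![m, m + (p - a) * s; m + d * s, m + (d - a) * s]
    IsMixedSaddle M ![a / p, (p - a) / p] ![(p - d) / p, d / p] ∧
      payoff M ![a / p, (p - a) / p] ![(p - d) / p, d / p] = m + d * (p - a) / p * s := by
  intro M
  have hp : p ≠ 0 := (hd.trans_lt hdp).ne'
  refine isMixedSaddle_of_equalizers
    (vec_div_mem_Δ₂ ha (by linarith) (by ring) (by linarith))
    (vec_div_mem_Δ₂ (by linarith) hd (by ring) (by linarith)) ?_ ?_ ?_ ?_ <;>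
  · simp only [M, of_apply, cons_val', cons_val_zero, cons_val_one, empty_val',
      cons_val_fin_one]
    field_simp
    ring

theorem stmt_7_general (F B K W g d a p0 p1 : ℝ) (hd : 0 < d) (ha : 0 < a)
    (hpt : (F + B * W) ^ 2 * p1 - (F - B * K) ^ 2 * p0 > max d a)
    (x : ℝ) :
    let pt : ℝ := (F + B * W) ^ 2 * p1 - (F - B * K) ^ 2 * p0
    let m11 : ℝ := p0 * ((F - B * K) * x) ^ 2
    let M : Matrix (Fin 2) (Fin 2) ℝ :=
      !![m11, p1 * ((F + B * W) * x) ^ 2 - a * x ^ 2;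
         m11 + d * x ^ 2, m11 + (d - a) * x ^ 2]
    let ys : Fin 2 → ℝ := ![a / pt, (pt - a) / pt]
    let zs : Fin 2 → ℝ := ![(pt - d) / pt, d / pt]
    ys ∈ Δ₂ ∧ zs ∈ Δ₂ ∧ IsMixedSaddle M ys zs ∧
    g * x ^ 2 + payoff M ys zs
      = (g + (F - B * K) ^ 2 * p0 + d - d * a / pt) * x ^ 2 := by
  intro pt m11 M ys zs
  have hdpt : d < pt := (le_max_left d a).trans_lt hpt
  have hapt : a < pt := (le_max_right d a).trans_lt hpt
  have hm12 : p1 * ((F + B * W) * x) ^ 2 - a * x ^ 2 = m11 + (pt - a) * x ^ 2 := by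
    simp only [m11, pt]
    ring
  have hM : M = !![m11, m11 + (pt - a) * x ^ 2; m11 + d * x ^ 2, m11 + (d - a) * x ^ 2] := by
    simp only [M, hm12]
  obtain ⟨hsaddle, hvalue⟩ := flipDyn_isMixedSaddle (m := m11) (s := x ^ 2) ha.le hd.le hapt hdpt
  rw [hM]
  refine ⟨hsaddle.1, hsaddle.2.1, hsaddle, ?_⟩
  have hpt0 : pt ≠ 0 := (hd.trans hdpt).ne'
  rw [hvalue]
  simp only [m11]
  field_simp
  ring

/-- scalar FlipDyn game, defender-controlled state: the
state-independent strategies form a mixed saddle point of Ξ⁰(x), with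
quadratic value p0ₖ·x². -/
theorem stmt_7 (F B K W g d a p0 p1 : ℝ) (hd : 0 < d) (ha : 0 < a)
    (hp0 : 0 ≤ p0) (hp1 : 0 ≤ p1)
    (hpt : (F + B * W) ^ 2 * p1 - (F - B * K) ^ 2 * p0 > max d a)
    (x : ℝ) (hx : x ≠ 0) :
    let pt : ℝ := (F + B * W) ^ 2 * p1 - (F - B * K) ^ 2 * p0
    let m11 : ℝ := p0 * ((F - B * K) * x) ^ 2
    let M : Matrix (Fin 2) (Fin 2) ℝ :=
      !![m11, p1 * ((F + B * W) * x) ^ 2 - a * x ^ 2;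
         m11 + d * x ^ 2, m11 + (d - a) * x ^ 2]
    let ys : Fin 2 → ℝ := ![a / pt, (pt - a) / pt]
    let zs : Fin 2 → ℝ := ![(pt - d) / pt, d / pt]
    ys ∈ Δ₂ ∧ zs ∈ Δ₂ ∧ IsMixedSaddle M ys zs ∧
    g * x ^ 2 + payoff M ys zs
      = (g + (F - B * K) ^ 2 * p0 + d - d * a / pt) * x ^ 2 :=
  stmt_7_general F B K W g d a p0 p1 hd ha hpt x
end

section
/- Let Q, P0, P1 be symmetric n×n real matrices, let B̃ and W̃ be n×n real matrices, let d > 0 and a > 0 be real numbers, and suppose P̃ := W̃ᵀ P1 W̃ − B̃ᵀ P0 B̃ is positive definite. Then for every nonzero x ∈ ℝⁿ, the exact value expression under adversary control satisfies the upper bound xᵀ(Q − a·I + W̃ᵀ P1 W̃)x + d·a·(xᵀx)²/(xᵀ P̃ x) ≤ xᵀ(Q − a·I + W̃ᵀ P1 W̃ + d·a·P̃⁻¹)x. -/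
/-!
Cauchy–Schwarz for the inner product `⟪u, v⟫ = uᵀ P̃ v`, applied to `x` and `P̃⁻¹ x`, gives
`(xᵀx)² ≤ (xᵀ P̃ x) (xᵀ P̃⁻¹ x)`. Dividing by `xᵀ P̃ x > 0` bounds the rational term
`d a (xᵀx)² / (xᵀ P̃ x)` by the quadratic form `d a xᵀ P̃⁻¹ x`.
-/

open Matrix

namespace Matrix

variable {ι : Type*} [Fintype ι]

theorem PosSemidef.dotProduct_mulVec_sq_le {M : Matrix ι ι ℝ} (hM : M.PosSemidef) (x y : ι → ℝ) :
    (x ⬝ᵥ M *ᵥ y) ^ 2 ≤ (x ⬝ᵥ M *ᵥ x) * (y ⬝ᵥ M *ᵥ y) := by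
  let := M.toSeminormedAddCommGroup hM
  let := M.toInnerProductSpace hM
  have hinner : ∀ u v : ι → ℝ, inner ℝ u v = u ⬝ᵥ M *ᵥ v := fun u v => by
    change (M *ᵥ v) ⬝ᵥ star u = _
    rw [star_trivial, dotProduct_comm]
  simpa only [sq, hinner] using real_inner_mul_inner_self_le x y

variable [DecidableEq ι]

theorem PosDef.sq_dotProduct_le_mul_inv {M : Matrix ι ι ℝ} (hM : M.PosDef) (x : ι → ℝ) :
    (x ⬝ᵥ x) ^ 2 ≤ (x ⬝ᵥ M *ᵥ x) * (x ⬝ᵥ M⁻¹ *ᵥ x) := by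
  have hMy : M *ᵥ (M⁻¹ *ᵥ x) = x := by
    rw [mulVec_mulVec, mul_nonsing_inv _ hM.det_pos.ne'.isUnit, one_mulVec]
  have := hM.posSemidef.dotProduct_mulVec_sq_le x (M⁻¹ *ᵥ x)
  rwa [hMy, dotProduct_comm (M⁻¹ *ᵥ x)] at this

end Matrix

theorem mul_sq_div_le_of_sq_le_mul {c s q r : ℝ} (hc : 0 ≤ c) (hq : 0 < q) (h : s ^ 2 ≤ q * r) :
    c * s ^ 2 / q ≤ c * r := by
  rw [div_le_iff₀ hq, mul_assoc, mul_comm r]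
  exact mul_le_mul_of_nonneg_left h hc

theorem stmt_12_general {n : ℕ} (Q P0 P1 Bt Wt : Matrix (Fin n) (Fin n) ℝ)
    (d a : ℝ) (hd : 0 < d) (ha : 0 < a)
    (hPt : (Wtᵀ * P1 * Wt - Btᵀ * P0 * Bt).PosDef) :
    ∀ x : Fin n → ℝ, x ≠ 0 →
      x ⬝ᵥ (Q - a • (1 : Matrix (Fin n) (Fin n) ℝ) + Wtᵀ * P1 * Wt) *ᵥ x +
          d * a * (x ⬝ᵥ x) ^ 2 / (x ⬝ᵥ (Wtᵀ * P1 * Wt - Btᵀ * P0 * Bt) *ᵥ x)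
        ≤ x ⬝ᵥ (Q - a • (1 : Matrix (Fin n) (Fin n) ℝ) + Wtᵀ * P1 * Wt +
            (d * a) • (Wtᵀ * P1 * Wt - Btᵀ * P0 * Bt)⁻¹) *ᵥ x := by
  intro x hx
  set R := Q - a • (1 : Matrix (Fin n) (Fin n) ℝ) + Wtᵀ * P1 * Wt
  rw [add_mulVec R, dotProduct_add, smul_mulVec, dotProduct_smul, smul_eq_mul]
  gcongr
  exact mul_sq_div_le_of_sq_le_mul (mul_pos hd ha).le (hPt.dotProduct_mulVec_pos hx)
    (hPt.sq_dotProduct_le_mul_inv x)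

/-- the exact FlipDyn one-step value under adversary control is
bounded above by the quadratic form given by the approximate recursion matrix. -/
theorem stmt_12 {n : ℕ} (Q P0 P1 Bt Wt : Matrix (Fin n) (Fin n) ℝ)
    (hQ : Q.IsSymm) (hP0 : P0.IsSymm) (hP1 : P1.IsSymm)
    (d a : ℝ) (hd : 0 < d) (ha : 0 < a)
    (hPt : (Wtᵀ * P1 * Wt - Btᵀ * P0 * Bt).PosDef) :
    ∀ x : Fin n → ℝ, x ≠ 0 →
      x ⬝ᵥ (Q - a • (1 : Matrix (Fin n) (Fin n) ℝ) + Wtᵀ * P1 * Wt) *ᵥ x +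
          d * a * (x ⬝ᵥ x) ^ 2 / (x ⬝ᵥ (Wtᵀ * P1 * Wt - Btᵀ * P0 * Bt) *ᵥ x)
        ≤ x ⬝ᵥ (Q - a • (1 : Matrix (Fin n) (Fin n) ℝ) + Wtᵀ * P1 * Wt +
            (d * a) • (Wtᵀ * P1 * Wt - Btᵀ * P0 * Bt)⁻¹) *ᵥ x :=
  stmt_12_general Q P0 P1 Bt Wt d a hd ha hPt
end

section
/- Let v0, v1, d, a be real numbers with d > 0, a > 0, and v1 > v0 + max{d, a}, and let Ξ¹ = [[v1, v1 − a], [v0 + d, v1 + d − a]]. Then the mixed saddle point of Ξ¹ is unique: the pair y* = (1 − a/(v1 − v0), a/(v1 − v0)), z* = (d/(v1 − v0), 1 − d/(v1 − v0)) is a mixed saddle point, and any pair (y, z) ∈ Δ₂ × Δ₂ satisfying yᵀ Ξ¹ z' ≤ yᵀ Ξ¹ z ≤ y'ᵀ Ξ¹ z for all y', z' ∈ Δ₂ equals (y*, z*). -/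
/-!
On `Δ₂ × Δ₂` the payoff of `Ξ¹` depends only on the first coordinates `p = y 0`, `q = z 0`, and
completing the product writes it as `V + (v1 - v0) (p - p₀) (q - q₀)` with
`p₀ = 1 - a / (v1 - v0)` and `q₀ = d / (v1 - v0)`, both in `(0, 1)` because `v1 - v0 > max d a`.
At `(p₀, q₀)` each player is indifferent, so it is a saddle point. Conversely, deviating to `p₀`
and to `q₀` shows that a saddle point has payoff `V`, so `p = p₀` or `q = q₀`; then the other
player faces a linear payoff minimized (maximized) at an interior point, so its slope vanishes,
which pins the remaining coordinate.
-/

open Matrix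

open Set

lemma mem_Δ₂_of_mem_Icc {p : ℝ} (hp : p ∈ Icc 0 1) : ![p, 1 - p] ∈ Δ₂ :=
  ⟨by simpa using hp.1, by simpa using hp.2, by simp⟩

lemma eq_of_mem_Δ₂ {y : Fin 2 → ℝ} (hy : y ∈ Δ₂) : y = ![y 0, 1 - y 0] := by
  ext i
  fin_cases i
  · rfl
  · simp [← hy.2.2]

lemma eq_zero_of_forall_mul_le {c x₀ : ℝ} (hx₀ : x₀ ∈ Ioo 0 1)
    (h : ∀ x ∈ Icc (0 : ℝ) 1, c * x₀ ≤ c * x) : c = 0 := by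
  have h₀ := h 0 (by simp)
  have h₁ := h 1 (by simp)
  nlinarith [hx₀.1, hx₀.2]

lemma eq_of_isSaddle_bilinear {D p₀ q₀ p q : ℝ} (hD : D ≠ 0) (hp₀ : p₀ ∈ Ioo 0 1)
    (hq₀ : q₀ ∈ Ioo 0 1)
    (hcol : ∀ q' ∈ Icc (0 : ℝ) 1, D * (p - p₀) * (q' - q₀) ≤ D * (p - p₀) * (q - q₀))
    (hrow : ∀ p' ∈ Icc (0 : ℝ) 1, D * (p - p₀) * (q - q₀) ≤ D * (p' - p₀) * (q - q₀)) :
    p = p₀ ∧ q = q₀ := by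
  have hzero : D * (p - p₀) * (q - q₀) = 0 :=
    le_antisymm (by simpa using hrow p₀ (Ioo_subset_Icc_self hp₀))
      (by simpa using hcol q₀ (Ioo_subset_Icc_self hq₀))
  rcases mul_eq_zero.1 hzero with hp | hq
  · have hp : p = p₀ := sub_eq_zero.1 ((mul_eq_zero.1 hp).resolve_left hD)
    refine ⟨hp, sub_eq_zero.1 ((mul_eq_zero.1 ?_).resolve_left hD)⟩
    refine eq_zero_of_forall_mul_le hp₀ fun p' hp' => ?_
    linarith [hrow p' hp', hp]
  · have hq : q = q₀ := sub_eq_zero.1 hq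
    refine ⟨sub_eq_zero.1 ((mul_eq_zero.1 ?_).resolve_left hD), hq⟩
    refine neg_eq_zero.1 (eq_zero_of_forall_mul_le hq₀ fun q' hq' => ?_)
    linarith [hcol q' hq', hq]

lemma payoff_flipDyn {v0 v1 d a : ℝ} (hs : v1 - v0 ≠ 0) {y z : Fin 2 → ℝ} (hy : y ∈ Δ₂)
    (hz : z ∈ Δ₂) :
    payoff !![v1, v1 - a; v0 + d, v1 + d - a] y z =
      v1 - a + a * d / (v1 - v0) +
        (v1 - v0) * (y 0 - (1 - a / (v1 - v0))) * (z 0 - d / (v1 - v0)) := by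
  rw [eq_of_mem_Δ₂ hy, eq_of_mem_Δ₂ hz]
  simp only [payoff, of_apply, cons_val', cons_val_zero, cons_val_one, empty_val',
    cons_val_fin_one]
  field_simp
  ring

lemma isMixedSaddle_iff_of_payoff_eq {M : Matrix (Fin 2) (Fin 2) ℝ} {K D p₀ q₀ : ℝ} (hD : D ≠ 0)
    (hp₀ : p₀ ∈ Ioo 0 1) (hq₀ : q₀ ∈ Ioo 0 1)
    (hM : ∀ y ∈ Δ₂, ∀ z ∈ Δ₂, payoff M y z = K + D * (y 0 - p₀) * (z 0 - q₀))
    {y z : Fin 2 → ℝ} :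
    IsMixedSaddle M y z ↔ y = ![p₀, 1 - p₀] ∧ z = ![q₀, 1 - q₀] := by
  constructor
  · rintro ⟨hy, hz, hcol, hrow⟩
    have hcol' : ∀ q' ∈ Icc (0 : ℝ) 1,
        D * (y 0 - p₀) * (q' - q₀) ≤ D * (y 0 - p₀) * (z 0 - q₀) := by
      intro q' hq'
      have := hcol _ (mem_Δ₂_of_mem_Icc hq')
      rw [hM _ hy _ (mem_Δ₂_of_mem_Icc hq'), hM _ hy _ hz] at this
      simpa using this
    have hrow' : ∀ p' ∈ Icc (0 : ℝ) 1,
        D * (y 0 - p₀) * (z 0 - q₀) ≤ D * (p' - p₀) * (z 0 - q₀) := by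
      intro p' hp'
      have := hrow _ (mem_Δ₂_of_mem_Icc hp')
      rw [hM _ (mem_Δ₂_of_mem_Icc hp') _ hz, hM _ hy _ hz] at this
      simpa using this
    obtain ⟨hp, hq⟩ := eq_of_isSaddle_bilinear hD hp₀ hq₀ hcol' hrow'
    rw [eq_of_mem_Δ₂ hy, eq_of_mem_Δ₂ hz, hp, hq]
    exact ⟨rfl, rfl⟩
  · rintro ⟨rfl, rfl⟩
    have hy := mem_Δ₂_of_mem_Icc (Ioo_subset_Icc_self hp₀)
    have hz := mem_Δ₂_of_mem_Icc (Ioo_subset_Icc_self hq₀)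
    refine ⟨hy, hz, fun z' hz' => ?_, fun y' hy' => ?_⟩
    · rw [hM _ hy _ hz', hM _ hy _ hz]
      simp
    · rw [hM _ hy' _ hz, hM _ hy _ hz]
      simp

/-- uniqueness of the mixed saddle point of the FlipDyn matrix Ξ¹
(adversary in control). -/
theorem stmt_18 (v0 v1 d a : ℝ) (hd : 0 < d) (ha : 0 < a)
    (hv : v1 > v0 + max d a) :
    let M : Matrix (Fin 2) (Fin 2) ℝ := !![v1, v1 - a; v0 + d, v1 + d - a]
    let ys : Fin 2 → ℝ := ![1 - a / (v1 - v0), a / (v1 - v0)]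
    let zs : Fin 2 → ℝ := ![d / (v1 - v0), 1 - d / (v1 - v0)]
    IsMixedSaddle M ys zs ∧
    (∀ y ∈ Δ₂, ∀ z ∈ Δ₂,
      ((∀ z' ∈ Δ₂, payoff M y z' ≤ payoff M y z) ∧
       (∀ y' ∈ Δ₂, payoff M y z ≤ payoff M y' z)) → y = ys ∧ z = zs) := by
  intro M ys zs
  have hs : 0 < v1 - v0 := by linarith [le_max_left d a]
  have hp₀ : 1 - a / (v1 - v0) ∈ Ioo 0 1 := by
    constructor
    · rw [sub_pos, div_lt_one hs]; linarith [le_max_right d a]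
    · linarith [div_pos ha hs]
  have hq₀ : d / (v1 - v0) ∈ Ioo 0 1 :=
    ⟨div_pos hd hs, (div_lt_one hs).2 (by linarith [le_max_left d a])⟩
  have hys : ys = ![1 - a / (v1 - v0), 1 - (1 - a / (v1 - v0))] := by rw [sub_sub_cancel]
  have hsaddle := @isMixedSaddle_iff_of_payoff_eq M _ _ _ _ hs.ne' hp₀ hq₀
    fun _ hy _ hz => payoff_flipDyn hs.ne' hy hz
  rw [hys]
  exact ⟨hsaddle.2 ⟨rfl, rfl⟩, fun y hy z hz ⟨hcol, hrow⟩ => hsaddle.1 ⟨hy, hz, hcol, hrow⟩⟩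
end
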